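/- Let n ≥ 3 and 1 ≤ h ≤ n − 1. Suppose F_e ⊆ E(Q_n) with |F_e| ≤ h and F₁, F₂ ⊆ V(Q_n) with |F₁|, |F₂| ≤ n − h and |F₁ Δ F₂| ≥ 3. Then there is an edge of Q_n − F_e between V − (F₁ ∪ F₂) and F₁ Δ F₂. -/

import Mathlib

/-!
The hypercube `Q_n` is `n`-regular, bipartite by parity, and two distinct vertices have at most
two common neighbours. Pick two vertices `u₁ ≠ u₂` of `S = F₁ Δ F₂` in the majority parity class
of `S`. Their neighbourhoods cover at least `2n - 2` vertices, all of the other parity, so those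
lying in `F₁ ∪ F₂` are in the minority class of `S` or in `F₁ ∩ F₂`: at most
`(|F₁| + |F₂|) / 2 ≤ n - h` of them. The remaining `n - 2 + h > h` neighbours lie outside
`F₁ ∪ F₂`, and the edges joining them to `u₁` or `u₂` are pairwise distinct, so they cannot all
belong to `F_e`.
-/

/-- The n-dimensional hypercube: vertices are `Fin n → Bool`,
adjacent iff Hamming distance exactly 1. -/
def Qn (n : ℕ) : SimpleGraph (Fin n → Bool) where
  Adj u v := hammingDist u v = 1
  symm := ⟨fun u v (h : hammingDist u v = 1) => by show hammingDist v u = 1; rwa [hammingDist_comm]⟩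
  loopless := ⟨fun u (h : hammingDist u u = 1) => by simp [hammingDist_self] at h⟩

instance (n : ℕ) : DecidableRel (Qn n).Adj :=
  fun u v => inferInstanceAs (Decidable (hammingDist u v = 1))

open Finset SimpleGraph
open scoped symmDiff

namespace Finset

variable {α : Type*}

lemma card_symmDiff_add_two_mul_card_inter [DecidableEq α] (s t : Finset α) :
    #(s ∆ t) + 2 * #(s ∩ t) = #s + #t := by
  have := card_sdiff_add_card_eq_card (inter_subset_union (s := s) (t := t))
  rw [← card_union_add_card_inter, symmDiff_eq_sup_sdiff_inf]
  simp only [sup_eq_union, inf_eq_inter] at *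
  omega

lemma exists_two_mul_card_filter_ne_le (s : Finset α) (c : α → ZMod 2) :
    ∃ b, 2 * #{x ∈ s | c x ≠ b} ≤ #s := by
  have hsplit := card_filter_add_card_filter_not (s := s) (fun x => c x = 0)
  simp only [← ne_eq] at hsplit
  have hne : {x ∈ s | c x ≠ 1} = {x ∈ s | c x = 0} :=
    filter_congr fun x _ => by generalize c x = a; revert a; decide
  rcases le_total #{x ∈ s | c x = 0} #{x ∈ s | c x ≠ 0} with hle | hle
  · exact ⟨1, by rw [hne]; omega⟩
  · exact ⟨0, by omega⟩

end Finset

lemma Sym2.card_le_ncard_of_forall_exists_mem {α : Type*} [Finite α] {C U : Finset α}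
    (hCU : Disjoint C U) {E : Set (Sym2 α)} (h : ∀ x ∈ C, ∃ y ∈ U, s(x, y) ∈ E) :
    #C ≤ E.ncard := by
  choose! g hgU hgE using h
  rw [← Set.ncard_coe_finset]
  refine Set.ncard_le_ncard_of_injOn (fun x => s(x, g x)) hgE fun x hx y hy hxy => ?_
  rcases Sym2.eq_iff.1 hxy with ⟨hxy, -⟩ | ⟨hxg, -⟩
  · exact hxy
  · exact absurd (hxg ▸ hgU y hy) (disjoint_left.1 hCU hx)

namespace SimpleGraph

variable {V : Type*} [Fintype V] [DecidableEq V] {G : SimpleGraph V} [DecidableRel G.Adj]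

lemma IsRegularOfDegree.two_mul_le_card_neighborFinset_union_add_two {n : ℕ}
    (hreg : G.IsRegularOfDegree n) {u v : V}
    (hcodeg : #(G.neighborFinset u ∩ G.neighborFinset v) ≤ 2) :
    2 * n ≤ #(G.neighborFinset u ∪ G.neighborFinset v) + 2 := by
  have := card_union_add_card_inter (G.neighborFinset u) (G.neighborFinset v)
  rw [card_neighborFinset_eq_degree, card_neighborFinset_eq_degree, hreg, hreg] at this
  omega

lemma Coloring.two_mul_card_neighborFinset_union_inter_le (c : G.Coloring (ZMod 2))
    {A B : Finset V} {b : ZMod 2} (hmaj : 2 * #{x ∈ A ∆ B | c x ≠ b} ≤ #(A ∆ B))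
    {u₁ u₂ : V} (hu₁ : c u₁ = b) (hu₂ : c u₂ = b) :
    2 * #((G.neighborFinset u₁ ∪ G.neighborFinset u₂) ∩ (A ∪ B)) ≤ #A + #B := by
  have hsub : (G.neighborFinset u₁ ∪ G.neighborFinset u₂) ∩ (A ∪ B) ⊆
      {x ∈ A ∆ B | c x ≠ b} ∪ (A ∩ B) := by
    intro x hx
    simp only [mem_inter, mem_union, mem_neighborFinset] at hx
    have hcx : c x ≠ b := by
      rcases hx.1 with h | h
      · exact hu₁ ▸ (c.valid h).symm
      · exact hu₂ ▸ (c.valid h).symm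
    simp only [mem_union, mem_filter, mem_symmDiff, mem_inter]
    tauto
  have := (card_le_card hsub).trans (card_union_le _ _)
  have := card_symmDiff_add_two_mul_card_inter A B
  omega

theorem IsRegularOfDegree.exists_deleteEdges_adj_of_three_le_card_symmDiff {n : ℕ}
    (hreg : G.IsRegularOfDegree n) (c : G.Coloring (ZMod 2))
    (hcodeg : ∀ u v, u ≠ v → #(G.neighborFinset u ∩ G.neighborFinset v) ≤ 2)
    {A B : Finset V} (hS : 3 ≤ #(A ∆ B)) (Fe : Set (Sym2 V))
    (hFe : 2 * Fe.ncard + #A + #B + 4 < 4 * n) :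
    ∃ x ∉ A ∪ B, ∃ y ∈ A ∆ B, (G.deleteEdges Fe).Adj x y := by
  by_contra! hcut
  obtain ⟨b, hb⟩ := (A ∆ B).exists_two_mul_card_filter_ne_le c
  have hsplit := card_filter_add_card_filter_not (s := A ∆ B) (fun x => c x = b)
  simp only [← ne_eq] at hsplit
  obtain ⟨u₁, hu₁, u₂, hu₂, hne⟩ := one_lt_card.1 (show 1 < #{x ∈ A ∆ B | c x = b} by omega)
  rw [mem_filter] at hu₁ hu₂
  have hX := hreg.two_mul_le_card_neighborFinset_union_add_two (hcodeg _ _ hne)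
  have hXAB := c.two_mul_card_neighborFinset_union_inter_le hb hu₁.2 hu₂.2
  have hcutFe : #((G.neighborFinset u₁ ∪ G.neighborFinset u₂) \ (A ∪ B)) ≤ Fe.ncard := by
    refine Sym2.card_le_ncard_of_forall_exists_mem (U := A ∆ B)
      (disjoint_sdiff_self_left.mono_right symmDiff_le_sup) fun x hx => ?_
    obtain ⟨hxX, hxAB⟩ := mem_sdiff.1 hx
    obtain ⟨y, hy, hxy⟩ : ∃ y ∈ A ∆ B, G.Adj x y := by
      rcases mem_union.1 hxX with h | h
      · exact ⟨u₁, hu₁.1, (mem_neighborFinset _ _ _).1 h |>.symm⟩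
      · exact ⟨u₂, hu₂.1, (mem_neighborFinset _ _ _).1 h |>.symm⟩
    refine ⟨y, hy, ?_⟩
    by_contra hnot
    exact hcut x hxAB y hy ((deleteEdges_adj ..).2 ⟨hxy, hnot⟩)
  have := card_sdiff_add_card_inter (G.neighborFinset u₁ ∪ G.neighborFinset u₂) (A ∪ B)
  omega

end SimpleGraph

namespace Qn

variable {n : ℕ}

def flipAt (u : Fin n → Bool) (i : Fin n) : Fin n → Bool := Function.update u i (!u i)

lemma flipAt_flipAt (u : Fin n → Bool) (i : Fin n) : flipAt (flipAt u i) i = u := by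
  simp [flipAt]

lemma flipAt_apply_self_ne (u : Fin n → Bool) (i : Fin n) : flipAt u i i ≠ u i := by
  simp [flipAt]

lemma flipAt_injective (u : Fin n → Bool) : Function.Injective (flipAt u) := by
  intro i j hij
  by_contra hne
  have := congrFun hij i
  simp [flipAt, Function.update_of_ne hne] at this

lemma adj_iff_exists_eq_flipAt {u w : Fin n → Bool} : (Qn n).Adj u w ↔ ∃ i, w = flipAt u i := by
  change #{i | u i ≠ w i} = 1 ↔ _
  rw [card_eq_one]
  refine exists_congr fun i => ?_
  rw [Finset.ext_iff, funext_iff]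
  refine forall_congr' fun j => ?_
  by_cases hj : j = i
  · subst hj; cases hu : u j <;> cases hw : w j <;> simp [flipAt, hu, hw]
  · simp [flipAt, hj, eq_comm]

lemma neighborFinset_eq_image_flipAt (u : Fin n → Bool) :
    (Qn n).neighborFinset u = univ.image (flipAt u) := by
  ext w
  simp [adj_iff_exists_eq_flipAt, eq_comm]

lemma isRegularOfDegree : (Qn n).IsRegularOfDegree n := fun u => by
  rw [← card_neighborFinset_eq_degree, neighborFinset_eq_image_flipAt,
    card_image_of_injective _ (flipAt_injective u), card_univ, Fintype.card_fin]

def parity (v : Fin n → Bool) : ZMod 2 := #{i | v i}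

lemma parity_eq_add_hammingDist (u w : Fin n → Bool) :
    parity w = parity u + hammingDist u w := by
  simp only [parity, hammingDist, natCast_card_filter, ← sum_add_distrib]
  refine sum_congr rfl fun i _ => ?_
  cases u i <;> cases w i <;> decide

def parityColoring : (Qn n).Coloring (ZMod 2) :=
  Coloring.mk parity fun {u w} (h : hammingDist u w = 1) => by
    rw [parity_eq_add_hammingDist u w, h, Nat.cast_one, ne_eq, left_eq_add]
    exact one_ne_zero

lemma neighborFinset_inter_subset_image_flipAt {u v : Fin n → Bool} (huv : u ≠ v) :
    (Qn n).neighborFinset u ∩ (Qn n).neighborFinset v ⊆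
      ({i | u i ≠ v i} : Finset _).image (flipAt u) := by
  intro w hw
  simp only [mem_inter, mem_neighborFinset, adj_iff_exists_eq_flipAt] at hw
  obtain ⟨⟨i, rfl⟩, ⟨k, hk⟩⟩ := hw
  have hu : u = flipAt (flipAt u i) i := (flipAt_flipAt u i).symm
  have hv : v = flipAt (flipAt u i) k := by rw [hk, flipAt_flipAt]
  have hik : i ≠ k := by rintro rfl; exact huv (hu.trans hv.symm)
  refine mem_image.2 ⟨i, mem_filter.2 ⟨mem_univ _, ?_⟩, rfl⟩
  rw [hv, flipAt, Function.update_of_ne hik]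
  exact (flipAt_apply_self_ne u i).symm

lemma card_neighborFinset_inter_le_two {u v : Fin n → Bool} (huv : u ≠ v) :
    #((Qn n).neighborFinset u ∩ (Qn n).neighborFinset v) ≤ 2 := by
  obtain hempty | ⟨w, hw⟩ :=
    ((Qn n).neighborFinset u ∩ (Qn n).neighborFinset v).eq_empty_or_nonempty
  · simp [hempty]
  rw [mem_inter, mem_neighborFinset, mem_neighborFinset] at hw
  calc _ ≤ #(({i | u i ≠ v i} : Finset _).image (flipAt u)) :=
        card_le_card (neighborFinset_inter_subset_image_flipAt huv)
    _ ≤ hammingDist u v := card_image_le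
    _ ≤ hammingDist u w + hammingDist w v := hammingDist_triangle u w v
    _ = 2 := by rw [hw.1, hammingDist_comm, hw.2]

end Qn

theorem distinguishable_symmDiff_ge_three_general (n h : ℕ) (hn : 3 ≤ n)
    (Fe : Set (Sym2 (Fin n → Bool)))
    (hFec : Fe.ncard ≤ h)
    (F₁ F₂ : Set (Fin n → Bool))
    (h1 : F₁.ncard ≤ n - h) (h2 : F₂.ncard ≤ n - h)
    (hΔ : 3 ≤ (symmDiff F₁ F₂).ncard) :
    ∃ x, x ∉ F₁ ∪ F₂ ∧ ∃ y ∈ symmDiff F₁ F₂, ((Qn n).deleteEdges Fe).Adj x y := by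
  classical
  rw [Set.ncard_eq_toFinset_card'] at h1 h2 hΔ
  rw [Set.toFinset_symmDiff] at hΔ
  -- needed when `n < h`: then `n - h = 0`, and `hΔ` is contradicted
  have hsum := card_symmDiff_add_two_mul_card_inter F₁.toFinset F₂.toFinset
  obtain ⟨x, hx, y, hy, hxy⟩ :=
    Qn.isRegularOfDegree.exists_deleteEdges_adj_of_three_le_card_symmDiff Qn.parityColoring
      (fun _ _ => Qn.card_neighborFinset_inter_le_two) hΔ Fe (by omega)
  exact ⟨x, by simpa using hx, y, by simpa [mem_symmDiff, Set.mem_symmDiff] using hy, hxy⟩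

theorem distinguishable_symmDiff_ge_three (n h : ℕ) (hn : 3 ≤ n) (hh1 : 1 ≤ h)
    (hhn : h ≤ n - 1) (Fe : Set (Sym2 (Fin n → Bool)))
    (hFe : Fe ⊆ (Qn n).edgeSet) (hFec : Fe.ncard ≤ h)
    (F₁ F₂ : Set (Fin n → Bool))
    (h1 : F₁.ncard ≤ n - h) (h2 : F₂.ncard ≤ n - h)
    (hΔ : 3 ≤ (symmDiff F₁ F₂).ncard) :
    ∃ x, x ∉ F₁ ∪ F₂ ∧ ∃ y ∈ symmDiff F₁ F₂, ((Qn n).deleteEdges Fe).Adj x y :=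
  distinguishable_symmDiff_ge_three_general n h hn Fe hFec F₁ F₂ h1 h2 hΔ
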